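/- arXiv:0908.3066 — 3 statements merged into one kernel-verified Lean document; each statement's English description precedes it below -/
import Mathlib

section
/- Let n ≥ 1 and let p : {1,…,n} → ℝ be nonnegative with Σ_{x=1}^n p_x = 1. Then the average query count of the geometric quantum search algorithm with ratio e satisfies Σ_{x=1}^n p_x · C(x) ≤ π·e·Σ_{x=1}^n p_x·√x, where C(x) = Σ_{s=0}^{⌊ln x⌋+1} (⌈(π/4)·√⌊e^s⌋⌉ + 1). -/
open Finset

/-- The total number of queries used by the geometric quantum search algorithm
with ratio `e` to find a marked element at position `x`:
`C(x) = Σ_{s=0}^{⌊ln x⌋+1} (⌈(π/4)·√⌊e^s⌋⌉ + 1)`. -/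
noncomputable def geomQueries (x : ℕ) : ℝ :=
  ∑ s ∈ Finset.range (⌊Real.log x⌋.toNat + 2),
    ((⌈(Real.pi / 4) * Real.sqrt ((⌊Real.exp s⌋ : ℤ) : ℝ)⌉ : ℝ) + 1)

lemma aux_r_lb : (1.64 : ℝ) ≤ Real.exp (1/2) := by
  nlinarith [Real.exp_one_gt_d9, Real.exp_pos (1/2 : ℝ),
    (Real.exp_nat_mul (1/2 : ℝ) 2).symm.trans (by norm_num : Real.exp ((2:ℕ) * (1/2 : ℝ)) = Real.exp 1)]

lemma geomQueries_le (x : ℕ) (hx : 1 ≤ x) :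
    geomQueries x ≤ Real.pi * Real.exp 1 * Real.sqrt x := by
  have hx1 : (1:ℝ) ≤ (x:ℝ) := by exact_mod_cast hx
  have hx0 : (0:ℝ) < (x:ℝ) := by linarith
  have hlog : 0 ≤ Real.log x := Real.log_nonneg hx1
  set m : ℕ := (⌊Real.log x⌋).toNat with hm
  have hmle : (m:ℝ) ≤ Real.log x := by
    have h1 : ((⌊Real.log x⌋.toNat : ℕ) : ℝ) = ((⌊Real.log x⌋ : ℤ) : ℝ) := by
      exact_mod_cast Int.toNat_of_nonneg (Int.floor_nonneg.mpr hlog)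
    rw [hm, h1]
    exact Int.floor_le _
  have hexpm : Real.exp m ≤ x := by
    calc Real.exp m ≤ Real.exp (Real.log x) := Real.exp_le_exp.mpr hmle
    _ = x := Real.exp_log hx0
  set r : ℝ := Real.exp (1/2) with hrdef
  have hr : (1.64 : ℝ) ≤ r := aux_r_lb
  have hrs : ∀ s : ℕ, Real.exp ((s:ℝ)/2) = r ^ s := by
    intro s
    rw [hrdef, ← Real.exp_nat_mul]
    ring_nf
  -- pointwise term bound
  have hterm : ∀ s ∈ Finset.range (m + 2),
      ((⌈(Real.pi / 4) * Real.sqrt ((⌊Real.exp s⌋ : ℤ) : ℝ)⌉ : ℝ) + 1) ≤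
        (Real.pi / 4) * r ^ s + 2 := by
    intro s _
    have hfl : ((⌊Real.exp (s:ℝ)⌋ : ℤ) : ℝ) ≤ Real.exp (s:ℝ) := Int.floor_le _
    have hsq : Real.sqrt ((⌊Real.exp (s:ℝ)⌋ : ℤ) : ℝ) ≤ Real.sqrt (Real.exp (s:ℝ)) :=
      Real.sqrt_le_sqrt hfl
    have hse : Real.sqrt (Real.exp (s:ℝ)) = r ^ s := by
      rw [← Real.exp_half, hrs]
    have hpi : (0:ℝ) ≤ Real.pi / 4 := by positivity
    have hy : (Real.pi / 4) * Real.sqrt ((⌊Real.exp (s:ℝ)⌋ : ℤ) : ℝ) ≤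
        (Real.pi / 4) * r ^ s := by
      rw [← hse]; exact mul_le_mul_of_nonneg_left hsq hpi
    have hceil := (Int.ceil_lt_add_one
      ((Real.pi / 4) * Real.sqrt ((⌊Real.exp (s:ℝ)⌋ : ℤ) : ℝ))).le
    linarith
  have h1 : geomQueries x ≤ ∑ s ∈ Finset.range (m + 2), ((Real.pi / 4) * r ^ s + 2) := by
    unfold geomQueries
    exact Finset.sum_le_sum hterm
  -- geometric sum bound
  have hr1 : (1:ℝ) < r := by linarith
  have hrne : r ≠ 1 := by linarith
  have hgeom : ∑ s ∈ Finset.range (m + 2), r ^ s = (r ^ (m+2) - 1) / (r - 1) := by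
    rw [geom_sum_eq hrne]
  have hrN : r ^ (m + 2) ≤ Real.exp 1 * Real.sqrt x := by
    have : r ^ (m + 2) = Real.exp (((m:ℝ) + 2)/2) := by
      rw [← hrs (m+2)]; push_cast; ring_nf
    rw [this, show ((m:ℝ) + 2)/2 = 1 + (m:ℝ)/2 by ring, Real.exp_add]
    have h2 : Real.exp ((m:ℝ)/2) = Real.sqrt (Real.exp m) := Real.exp_half _
    rw [h2]
    exact mul_le_mul_of_nonneg_left (Real.sqrt_le_sqrt hexpm) (Real.exp_pos 1).le
  have hsumgeom : ∑ s ∈ Finset.range (m + 2), r ^ s ≤ Real.exp 1 * Real.sqrt x / (r - 1) := by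
    rw [hgeom]
    apply div_le_div_of_nonneg_right ?_ (by linarith) |>.trans_eq rfl
    · linarith
  -- count of constant terms
  have hlogsqrt : Real.log x ≤ 2 * (Real.sqrt x - 1) := by
    have hs0 : (0:ℝ) < Real.sqrt x := Real.sqrt_pos.mpr hx0
    have h3 : Real.log (Real.sqrt x) ≤ Real.sqrt x - 1 := Real.log_le_sub_one_of_pos hs0
    have h4 : Real.log x = 2 * Real.log (Real.sqrt x) := by
      rw [Real.log_sqrt hx0.le]; ring
    linarith
  have hmx : 2 * ((m:ℝ) + 2) ≤ 4 * Real.sqrt x := by linarith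
  -- combine
  have hsum2 : ∑ s ∈ Finset.range (m + 2), ((Real.pi / 4) * r ^ s + 2)
      = (Real.pi / 4) * (∑ s ∈ Finset.range (m + 2), r ^ s) + 2 * ((m:ℝ) + 2) := by
    rw [Finset.sum_add_distrib, ← Finset.mul_sum, Finset.sum_const, Finset.card_range]
    push_cast; ring
  have hsx : (0:ℝ) ≤ Real.sqrt x := Real.sqrt_nonneg _
  have hpi4 : (0:ℝ) ≤ Real.pi / 4 := by positivity
  have hmid : geomQueries x ≤
      (Real.pi / 4) * (Real.exp 1 * Real.sqrt x / (r - 1)) + 4 * Real.sqrt x := by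
    calc geomQueries x ≤ _ := h1
    _ = (Real.pi / 4) * (∑ s ∈ Finset.range (m + 2), r ^ s) + 2 * ((m:ℝ) + 2) := hsum2
    _ ≤ (Real.pi / 4) * (Real.exp 1 * Real.sqrt x / (r - 1)) + 4 * Real.sqrt x := by
        have := mul_le_mul_of_nonneg_left hsumgeom hpi4
        linarith
  -- numeric coefficient inequality
  have hpil : (3.141592 : ℝ) < Real.pi := Real.pi_gt_d6
  have hpiu : Real.pi < 3.15 := Real.pi_lt_d2
  have hel : (2.7182818283 : ℝ) < Real.exp 1 := Real.exp_one_gt_d9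
  have heu : Real.exp 1 < 2.7182818286 := Real.exp_one_lt_d9
  have hd : (0:ℝ) < r - 1 := by linarith
  have hcoef : (Real.pi / 4) * (Real.exp 1 / (r - 1)) + 4 ≤ Real.pi * Real.exp 1 := by
    have heq : Real.pi / 4 * (Real.exp 1 / (r - 1)) = (Real.pi * Real.exp 1 / 4) / (r - 1) := by
      ring
    have hkey : (Real.pi * Real.exp 1 / 4) / (r - 1) ≤ Real.pi * Real.exp 1 - 4 := by
      rw [div_le_iff₀ hd]
      have hPl : (8.53 : ℝ) ≤ Real.pi * Real.exp 1 := by nlinarith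
      have hPu : Real.pi * Real.exp 1 ≤ 8.6 := by nlinarith
      have hprod : (4.53 : ℝ) * 0.64 ≤ (Real.pi * Real.exp 1 - 4) * (r - 1) :=
        mul_le_mul (by linarith) (by linarith) (by norm_num) (by linarith)
      linarith
    linarith [heq ▸ hkey]
  have hfin := mul_le_mul_of_nonneg_right hcoef hsx
  have heq2 : (Real.pi / 4 * (Real.exp 1 / (r - 1)) + 4) * Real.sqrt x
      = Real.pi / 4 * (Real.exp 1 * Real.sqrt x / (r - 1)) + 4 * Real.sqrt x := by ring
  rw [heq2] at hfin
  calc geomQueries x ≤ _ := hmid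
  _ ≤ Real.pi * Real.exp 1 * Real.sqrt x := hfin

theorem geom_search_average_queries_le (n : ℕ) (hn : 1 ≤ n) (p : ℕ → ℝ)
    (hp : ∀ x ∈ Finset.Icc 1 n, 0 ≤ p x)
    (hsum : ∑ x ∈ Finset.Icc 1 n, p x = 1) :
    ∑ x ∈ Finset.Icc 1 n, p x * geomQueries x ≤
      Real.pi * Real.exp 1 * ∑ x ∈ Finset.Icc 1 n, p x * Real.sqrt x := by
  rw [Finset.mul_sum]
  apply Finset.sum_le_sum
  intro x hx
  have hx1 : 1 ≤ x := (Finset.mem_Icc.mp hx).1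
  have h := geomQueries_le x hx1
  have hpx := hp x hx
  calc p x * geomQueries x ≤ p x * (Real.pi * Real.exp 1 * Real.sqrt x) :=
        mul_le_mul_of_nonneg_left h hpx
  _ = Real.pi * Real.exp 1 * (p x * Real.sqrt x) := by ring
end

section
/- Let k < 0 be real, define S_j(n) = Σ_{x=1}^n x^j (real powers), α(n) = 1/S_k(n), x₀(n) = ⌊(α(n)·n)^{−1/k}⌋, and U(n) = √(α(n))·Σ_{x=1}^{min(x₀(n),n)} x^{k/2} + α(n)·√n·Σ_{x=min(x₀(n),n)+1}^{n} x^k. Then U(n) = O(√n) if −1 ≤ k < 0; U(n) = O(n^{−(1/2 + 1/k)}) if −2 < k < −1; U(n) = O(ln n) if k = −2; and U(n) = O(1) if k < −2. -/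
open Finset

/-- `f(n) = O(g(n))`: there exist `C > 0` and `N` such that
`f n ≤ C·g n` for all `n ≥ N`. -/
def IsBigO' (f g : ℕ → ℝ) : Prop :=
  ∃ C : ℝ, ∃ N : ℕ, 0 < C ∧ ∀ n ≥ N, f n ≤ C * g n

/-- `S_j(n) = Σ_{x=1}^n x^j` (real powers). -/
noncomputable def powSum (j : ℝ) (n : ℕ) : ℝ :=
  ∑ x ∈ Finset.Icc 1 n, (x : ℝ) ^ j

/-- The normalising constant `α(n) = 1 / S_k(n)` of the power-law distribution. -/
noncomputable def normConst (k : ℝ) (n : ℕ) : ℝ := 1 / powSum k n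

/-- The largest `x` with `α(n)·x^k ≥ 1/n`, i.e. `x₀(n) = ⌊(α(n)·n)^{-1/k}⌋`. -/
noncomputable def cutoff (k : ℝ) (n : ℕ) : ℕ :=
  ⌊(normConst k n * n) ^ (-1 / k)⌋.toNat

/-- The expected query bound
`U(n) = √α(n)·Σ_{x=1}^{min(x₀(n),n)} x^{k/2} + α(n)·√n·Σ_{x=min(x₀(n),n)+1}^n x^k`. -/
noncomputable def unknownCost (k : ℝ) (n : ℕ) : ℝ :=
  Real.sqrt (normConst k n) *
      (∑ x ∈ Finset.Icc 1 (min (cutoff k n) n), (x : ℝ) ^ (k / 2)) +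
    normConst k n * Real.sqrt n *
      (∑ x ∈ Finset.Icc (min (cutoff k n) n + 1) n, (x : ℝ) ^ k)


lemma sum_Icc_succ_le_integral {p : ℝ} (hp : p < 0) {a b : ℕ} (ha : 1 ≤ a) (hab : a ≤ b) :
    ∑ x ∈ Finset.Icc (a + 1) b, (x : ℝ) ^ p ≤ ∫ t in (a : ℝ)..(b : ℝ), t ^ p := by
  have ha0 : (0 : ℝ) < a := by exact_mod_cast ha
  have hanti : AntitoneOn (fun t : ℝ => t ^ p) (Set.Icc (a : ℝ) (b : ℝ)) := by
    intro x hx y hy hxy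
    exact Real.rpow_le_rpow_of_nonpos (lt_of_lt_of_le ha0 hx.1) hxy hp.le
  have := AntitoneOn.sum_le_integral_Ico (f := fun t : ℝ => t ^ p) hab hanti
  refine le_trans (le_of_eq ?_) this
  rw [← Finset.Ico_add_one_right_eq_Icc]
  rw [Finset.sum_Ico_eq_sum_range, Finset.sum_Ico_eq_sum_range]
  have : b + 1 - (a + 1) = b - a := by omega
  rw [this]
  refine Finset.sum_congr rfl fun i _ => ?_
  congr 1
  push_cast
  ring

lemma tail_sum_le {p : ℝ} (hp : p < -1) {a : ℕ} (ha : 1 ≤ a) (b : ℕ) :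
    ∑ x ∈ Finset.Icc (a + 1) b, (x : ℝ) ^ p ≤ (a : ℝ) ^ (p + 1) / (-(p + 1)) := by
  have hp1 : 0 < -(p + 1) := by linarith
  have ha0 : (0 : ℝ) < a := by exact_mod_cast ha
  have hrhs : 0 ≤ (a : ℝ) ^ (p + 1) / (-(p + 1)) :=
    div_nonneg (Real.rpow_nonneg ha0.le _) hp1.le
  rcases le_or_gt (a + 1) b with hab | hab
  · have h1 := sum_Icc_succ_le_integral (by linarith : p < 0) ha (by omega : a ≤ b)
    have h2 : (∫ t in (a : ℝ)..(b : ℝ), t ^ p) =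
        ((b : ℝ) ^ (p + 1) - (a : ℝ) ^ (p + 1)) / (p + 1) := by
      apply integral_rpow
      right
      refine ⟨by linarith, Set.notMem_uIcc_of_lt ha0 ?_⟩
      have : (0:ℝ) < a + 1 := by linarith
      exact lt_of_lt_of_le this (by exact_mod_cast Nat.cast_le.mpr hab)
    refine h1.trans ?_
    rw [h2, show ((b:ℝ) ^ (p+1) - (a:ℝ) ^ (p+1)) / (p+1)
        = ((a:ℝ) ^ (p+1) - (b:ℝ) ^ (p+1)) / (-(p+1)) by
          rw [div_neg, ← neg_div]; ring_nf]
    have hb0 : 0 ≤ (b:ℝ) ^ (p+1) := Real.rpow_nonneg (by positivity) _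
    gcongr
    linarith
  · rw [Finset.Icc_eq_empty (by omega)]
    simpa using hrhs

lemma head_sum_le_mid {p : ℝ} (hp0 : -1 < p) (hp : p < 0) (b : ℕ) :
    ∑ x ∈ Finset.Icc 1 b, (x : ℝ) ^ p ≤ 1 + (b : ℝ) ^ (p + 1) / (p + 1) := by
  have hp1 : 0 < p + 1 := by linarith
  rcases Nat.eq_zero_or_pos b with rfl | hb
  · simp [Real.zero_rpow hp1.ne']
  have hins : Finset.Icc 1 b = insert 1 (Finset.Icc 2 b) := by
    ext x; simp only [Finset.mem_Icc, Finset.mem_insert]; omega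
  rw [hins, Finset.sum_insert (by simp)]
  have h1 : ((1:ℕ):ℝ) ^ p = 1 := by norm_num
  rw [h1]
  have h2 : ∑ x ∈ Finset.Icc 2 b, (x : ℝ) ^ p ≤ (b : ℝ) ^ (p + 1) / (p + 1) := by
    rcases le_or_gt 1 b with hb1 | hb1
    · have := sum_Icc_succ_le_integral hp le_rfl hb1
      refine le_trans this ?_
      rw [integral_rpow (Or.inl hp0)]
      have : ((1:ℝ)) ^ (p+1) = 1 := Real.one_rpow _
      rw [Nat.cast_one, this]
      have hb0 : (0:ℝ) ≤ (b:ℝ) ^ (p+1) := Real.rpow_nonneg (by positivity) _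
      gcongr
      linarith
    · interval_cases b
  gcongr


lemma head_sum_le_conv {p : ℝ} (hp : p < -1) (b : ℕ) :
    ∑ x ∈ Finset.Icc 1 b, (x : ℝ) ^ p ≤ 1 + 1 / (-(p + 1)) := by
  have hp1 : 0 < -(p+1) := by linarith
  rcases Nat.eq_zero_or_pos b with rfl | hb
  · rw [Finset.Icc_eq_empty (by omega), Finset.sum_empty]
    have : 0 ≤ 1/(-(p+1)) := div_nonneg zero_le_one hp1.le
    linarith
  have hins : Finset.Icc 1 b = insert 1 (Finset.Icc 2 b) := by
    ext x; simp only [Finset.mem_Icc, Finset.mem_insert]; omega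
  rw [hins, Finset.sum_insert (by simp)]
  have h1 : ((1:ℕ):ℝ) ^ p = 1 := by norm_num
  rw [h1]
  have := tail_sum_le hp (le_refl 1) b
  rw [show ((1:ℕ):ℝ) ^ (p+1) = 1 by norm_num] at this
  linarith

lemma head_sum_le_harmonic (b : ℕ) :
    ∑ x ∈ Finset.Icc 1 b, (x : ℝ) ^ (-1 : ℝ) ≤ 1 + Real.log b := by
  rcases Nat.eq_zero_or_pos b with rfl | hb
  · simp
  have hins : Finset.Icc 1 b = insert 1 (Finset.Icc 2 b) := by
    ext x; simp only [Finset.mem_Icc, Finset.mem_insert]; omega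
  rw [hins, Finset.sum_insert (by simp)]
  have h1 : ((1:ℕ):ℝ) ^ (-1:ℝ) = 1 := by norm_num
  rw [h1]
  have h2 : ∑ x ∈ Finset.Icc 2 b, (x : ℝ) ^ (-1:ℝ) ≤ Real.log b := by
    have := sum_Icc_succ_le_integral (by norm_num : (-1:ℝ) < 0) (le_refl 1) hb
    refine le_trans this ?_
    have heq : (∫ t in ((1:ℕ):ℝ)..((b:ℕ):ℝ), t ^ (-1:ℝ)) = ∫ t in (1:ℝ)..(b:ℝ), 1 / t := by
      norm_num
      apply intervalIntegral.integral_congr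
      intro t ht
      show t ^ (-1:ℝ) = t⁻¹
      exact Real.rpow_neg_one t
    rw [heq, integral_one_div]
    · rw [div_one]
    · refine Set.notMem_uIcc_of_lt one_pos ?_
      exact_mod_cast hb
  linarith

lemma one_le_powSum (k : ℝ) {n : ℕ} (hn : 1 ≤ n) : 1 ≤ powSum k n := by
  have h1 : ((1:ℕ):ℝ) ^ k = 1 := by norm_num
  calc (1:ℝ) = ((1:ℕ):ℝ) ^ k := h1.symm
  _ ≤ ∑ x ∈ Finset.Icc 1 n, (x : ℝ) ^ k := by
      apply Finset.single_le_sum (f := fun x : ℕ => (x:ℝ) ^ k)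
      · intro i _; positivity
      · simp [hn]

lemma powSum_pos (k : ℝ) {n : ℕ} (hn : 1 ≤ n) : 0 < powSum k n :=
  lt_of_lt_of_le one_pos (one_le_powSum k hn)

lemma powSum_le_card {k : ℝ} (hk : k ≤ 0) (n : ℕ) : powSum k n ≤ n := by
  calc powSum k n ≤ ∑ _x ∈ Finset.Icc 1 n, (1:ℝ) := by
        apply Finset.sum_le_sum
        intro i hi
        apply Real.rpow_le_one_of_one_le_of_nonpos _ hk
        exact_mod_cast (Finset.mem_Icc.mp hi).1
  _ = n := by simp

lemma normConst_pos (k : ℝ) {n : ℕ} (hn : 1 ≤ n) : 0 < normConst k n :=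
  div_pos one_pos (powSum_pos k hn)

lemma normConst_le_one (k : ℝ) {n : ℕ} (hn : 1 ≤ n) : normConst k n ≤ 1 := by
  rw [normConst, div_le_one (powSum_pos k hn)]
  exact one_le_powSum k hn

lemma normConst_mul_powSum (k : ℝ) {n : ℕ} (hn : 1 ≤ n) :
    normConst k n * powSum k n = 1 := by
  rw [normConst]
  field_simp [ne_of_gt (powSum_pos k hn)]

lemma one_le_normConst_mul {k : ℝ} (hk : k ≤ 0) {n : ℕ} (hn : 1 ≤ n) :
    1 ≤ normConst k n * n := by
  rw [normConst, div_mul_eq_mul_div, one_mul, le_div_iff₀ (powSum_pos k hn), one_mul]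
  exact powSum_le_card hk n

lemma normConst_mul_le (k : ℝ) {n : ℕ} (hn : 1 ≤ n) : normConst k n * n ≤ n := by
  have := normConst_le_one k hn
  have h0 : (0:ℝ) ≤ n := Nat.cast_nonneg n
  nlinarith [normConst_pos k hn]

/-- The real threshold whose floor is `cutoff`. -/
noncomputable def ycut (k : ℝ) (n : ℕ) : ℝ := (normConst k n * n) ^ (-1 / k)

lemma one_le_ycut {k : ℝ} (hk : k < 0) {n : ℕ} (hn : 1 ≤ n) : 1 ≤ ycut k n := by
  apply Real.one_le_rpow (one_le_normConst_mul hk.le hn)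
  rw [neg_div]
  have : 0 < -(1/k) := by
    rw [neg_pos]
    exact div_neg_of_pos_of_neg one_pos hk
  linarith

lemma cutoff_cast {k : ℝ} (hk : k < 0) {n : ℕ} (hn : 1 ≤ n) :
    ((cutoff k n : ℕ) : ℝ) = ((⌊ycut k n⌋ : ℤ) : ℝ) := by
  have h0 : (0:ℤ) ≤ ⌊ycut k n⌋ := by
    rw [Int.le_floor]
    exact_mod_cast zero_le_one.trans (one_le_ycut hk hn)
  rw [show cutoff k n = ⌊ycut k n⌋.toNat from rfl]
  exact_mod_cast congrArg (Int.cast : ℤ → ℝ) (Int.toNat_of_nonneg h0)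

lemma cutoff_le_ycut {k : ℝ} (hk : k < 0) {n : ℕ} (hn : 1 ≤ n) :
    ((cutoff k n : ℕ) : ℝ) ≤ ycut k n := by
  rw [cutoff_cast hk hn]; exact Int.floor_le _

lemma ycut_lt_cutoff_add_one {k : ℝ} (hk : k < 0) {n : ℕ} (hn : 1 ≤ n) :
    ycut k n - 1 < ((cutoff k n : ℕ) : ℝ) := by
  rw [cutoff_cast hk hn]; exact Int.sub_one_lt_floor _

lemma one_le_cutoff {k : ℝ} (hk : k < 0) {n : ℕ} (hn : 1 ≤ n) : 1 ≤ cutoff k n := by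
  have h1 : (1:ℤ) ≤ ⌊ycut k n⌋ := by
    rw [Int.le_floor]; exact_mod_cast one_le_ycut hk hn
  rw [show cutoff k n = ⌊ycut k n⌋.toNat from rfl]
  omega

lemma cost_le_two_sqrt {k : ℝ} (hk : k < 0) {n : ℕ} (hn : 1 ≤ n) :
    unknownCost k n ≤ 2 * Real.sqrt n := by
  set m := min (cutoff k n) n with hm
  have hmn : m ≤ n := min_le_right _ _
  have hS : 0 < powSum k n := powSum_pos k hn
  have hα : 0 < normConst k n := normConst_pos k hn
  have hαS : normConst k n * powSum k n = 1 := normConst_mul_powSum k hn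
  -- Cauchy-Schwarz for the first sum
  have hsq : ∀ x ∈ Finset.Icc 1 m, ((x:ℝ) ^ (k/2)) ^ 2 = (x:ℝ) ^ k := by
    intro x hx
    rw [← Real.rpow_natCast ((x:ℝ) ^ (k/2)) 2, ← Real.rpow_mul (Nat.cast_nonneg x)]
    norm_num
  have hsub : Finset.Icc 1 m ⊆ Finset.Icc 1 n := Finset.Icc_subset_Icc_right hmn
  have hsum_le : ∑ x ∈ Finset.Icc 1 m, (x:ℝ) ^ k ≤ powSum k n := by
    apply Finset.sum_le_sum_of_subset_of_nonneg hsub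
    intro i _ _; positivity
  have hCS2 : (∑ x ∈ Finset.Icc 1 m, (x:ℝ) ^ (k/2)) ^ 2 ≤ (n:ℝ) * powSum k n := by
    calc (∑ x ∈ Finset.Icc 1 m, (x:ℝ) ^ (k/2)) ^ 2
        = (∑ x ∈ Finset.Icc 1 m, (1:ℝ) * (x:ℝ) ^ (k/2)) ^ 2 := by simp
      _ ≤ (∑ _x ∈ Finset.Icc 1 m, (1:ℝ)^2) * ∑ x ∈ Finset.Icc 1 m, ((x:ℝ) ^ (k/2))^2 :=
          Finset.sum_mul_sq_le_sq_mul_sq _ _ _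
      _ = (m:ℝ) * ∑ x ∈ Finset.Icc 1 m, (x:ℝ) ^ k := by
          rw [Finset.sum_congr rfl hsq]
          simp [Nat.card_Icc]
      _ ≤ (n:ℝ) * powSum k n := by
          have hsums : 0 ≤ ∑ x ∈ Finset.Icc 1 m, (x:ℝ) ^ k := by positivity
          exact mul_le_mul (by exact_mod_cast hmn) hsum_le hsums (Nat.cast_nonneg n)
  have hfirst : Real.sqrt (normConst k n) * (∑ x ∈ Finset.Icc 1 m, (x:ℝ) ^ (k/2))
      ≤ Real.sqrt n := by
    have h0 : 0 ≤ ∑ x ∈ Finset.Icc 1 m, (x:ℝ) ^ (k/2) := by positivity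
    have hle : (∑ x ∈ Finset.Icc 1 m, (x:ℝ) ^ (k/2)) ≤ Real.sqrt ((n:ℝ) * powSum k n) :=
      (Real.le_sqrt h0 (by positivity)).mpr hCS2
    calc Real.sqrt (normConst k n) * (∑ x ∈ Finset.Icc 1 m, (x:ℝ) ^ (k/2))
        ≤ Real.sqrt (normConst k n) * Real.sqrt ((n:ℝ) * powSum k n) := by
          exact mul_le_mul_of_nonneg_left hle (Real.sqrt_nonneg _)
      _ = Real.sqrt (normConst k n * ((n:ℝ) * powSum k n)) :=
          (Real.sqrt_mul hα.le _).symm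
      _ = Real.sqrt n := by
          rw [show normConst k n * ((n:ℝ) * powSum k n)
              = (normConst k n * powSum k n) * n by ring, hαS, one_mul]
  have hsecond : normConst k n * Real.sqrt n * (∑ x ∈ Finset.Icc (m+1) n, (x:ℝ) ^ k)
      ≤ Real.sqrt n := by
    have hsub2 : Finset.Icc (m+1) n ⊆ Finset.Icc 1 n := Finset.Icc_subset_Icc_left (by omega)
    have htail : ∑ x ∈ Finset.Icc (m+1) n, (x:ℝ) ^ k ≤ powSum k n := by
      apply Finset.sum_le_sum_of_subset_of_nonneg hsub2
      intro i _ _; positivity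
    calc normConst k n * Real.sqrt n * (∑ x ∈ Finset.Icc (m+1) n, (x:ℝ) ^ k)
        ≤ normConst k n * Real.sqrt n * powSum k n := by
          apply mul_le_mul_of_nonneg_left htail
          positivity
      _ = (normConst k n * powSum k n) * Real.sqrt n := by ring
      _ = Real.sqrt n := by rw [hαS, one_mul]
  rw [unknownCost]
  linarith

section Neg
variable {k : ℝ}

/-- Upper bound on `powSum k` when `k < -1`. -/
noncomputable def Bnd (k : ℝ) : ℝ := 1 + 1 / (-(k + 1))

lemma one_le_Bnd (hk : k < -1) : 1 ≤ Bnd k := by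
  have : 0 ≤ 1 / (-(k+1)) := by
    apply div_nonneg zero_le_one; linarith
  rw [Bnd]; linarith

lemma powSum_le_Bnd (hk : k < -1) (n : ℕ) : powSum k n ≤ Bnd k :=
  head_sum_le_conv hk n

lemma Bnd_le_normConst_inv (hk : k < -1) {n : ℕ} (hn : 1 ≤ n) :
    1 / Bnd k ≤ normConst k n := by
  rw [normConst]
  apply one_div_le_one_div_of_le (powSum_pos k hn) (powSum_le_Bnd hk n)

lemma ycut_le (hk : k < 0) {n : ℕ} (hn : 1 ≤ n) : ycut k n ≤ ((n:ℝ)) ^ (-1/k) := by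
  apply Real.rpow_le_rpow (mul_nonneg (normConst_pos k hn).le (Nat.cast_nonneg n))
    (normConst_mul_le k hn)
  rw [neg_div]
  have : 0 < -(1/k) := by rw [neg_pos]; exact div_neg_of_pos_of_neg one_pos hk
  linarith

lemma le_ycut (hk : k < -1) {n : ℕ} (hn : 1 ≤ n) :
    ((n:ℝ) / Bnd k) ^ (-1/k) ≤ ycut k n := by
  have hB : 0 < Bnd k := lt_of_lt_of_le one_pos (one_le_Bnd hk)
  apply Real.rpow_le_rpow (by positivity)
  · rw [div_eq_mul_one_div, mul_comm]
    exact mul_le_mul_of_nonneg_right (Bnd_le_normConst_inv hk hn) (Nat.cast_nonneg n)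
  · rw [neg_div]
    have : 0 < -(1/k) := by rw [neg_pos]; exact div_neg_of_pos_of_neg one_pos (by linarith)
    linarith

/-- Constant for the tail term. -/
noncomputable def Ctail (k : ℝ) : ℝ := (2:ℝ) ^ (-(k+1)) * (Bnd k) ^ ((1/k) * (k+1))

lemma one_le_Ctail (hk : k < -1) : 1 ≤ Ctail k := by
  have h1 : (1:ℝ) ≤ (2:ℝ) ^ (-(k+1)) :=
    Real.one_le_rpow one_le_two (by linarith)
  have h2 : (1:ℝ) ≤ (Bnd k) ^ ((1/k) * (k+1)) := by
    apply Real.one_le_rpow (one_le_Bnd hk)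
    have hk0 : k < 0 := by linarith
    have : 1/k < 0 := div_neg_of_pos_of_neg one_pos hk0
    nlinarith
  unfold Ctail
  nlinarith

lemma exponent_ineq (hk : k < -1) : k + 1 + 1/2 ≤ -(1/2 + 1/k) := by
  have hk0 : k ≠ 0 := by intro h; rw [h] at hk; norm_num at hk
  have h1 : 1/k * k = 1 := one_div_mul_cancel hk0
  nlinarith [sq_nonneg (k+1)]

lemma sqrt_mul_min_rpow (hk : k < -1) {n : ℕ} (hn : 1 ≤ n)
    (hbig : Bnd k * (2:ℝ) ^ (-k) ≤ (n:ℝ)) :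
    Real.sqrt n * ((min (cutoff k n) n : ℕ) : ℝ) ^ (k+1)
      ≤ Ctail k * (n:ℝ) ^ (-(1/2 + 1/k)) := by
  have hk0 : k < 0 := by linarith
  have hkne : k ≠ 0 := ne_of_lt hk0
  have hn1 : (1:ℝ) ≤ (n:ℝ) := by exact_mod_cast hn
  have hn0 : (0:ℝ) < (n:ℝ) := by linarith
  have hsqrt : Real.sqrt n = (n:ℝ) ^ ((1:ℝ)/2) := Real.sqrt_eq_rpow n
  have hepos : 0 ≤ (n:ℝ) ^ (-(1/2 + 1/k)) := Real.rpow_nonneg hn0.le _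
  have hCt : 1 ≤ Ctail k := one_le_Ctail hk
  rcases min_cases (cutoff k n) n with ⟨h1, h2⟩ | ⟨h1, h2⟩
  swap
  · -- min = n
    rw [h1, hsqrt, ← Real.rpow_add hn0]
    have he : (1:ℝ)/2 + (k+1) ≤ -(1/2 + 1/k) := by
      have := exponent_ineq hk; linarith
    calc (n:ℝ) ^ ((1:ℝ)/2 + (k+1)) ≤ (n:ℝ) ^ (-(1/2 + 1/k)) :=
          Real.rpow_le_rpow_of_exponent_le hn1 he
      _ ≤ Ctail k * (n:ℝ) ^ (-(1/2 + 1/k)) := le_mul_of_one_le_left hepos hCt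
  · -- min = cutoff
    have hB : 0 < Bnd k := lt_of_lt_of_le one_pos (one_le_Bnd hk)
    have hnB0 : (0:ℝ) < (n:ℝ) / Bnd k := by positivity
    have hnB : (2:ℝ) ^ (-k) ≤ (n:ℝ) / Bnd k := by
      rw [le_div_iff₀ hB]; linarith [hbig]
    have hexp : 0 ≤ -1/k := by
      rw [neg_div]
      have : 0 < -(1/k) := by rw [neg_pos]; exact div_neg_of_pos_of_neg one_pos hk0
      linarith
    have hy2 : (2:ℝ) ≤ ((n:ℝ) / Bnd k) ^ (-1/k) := by
      have h2eq : ((2:ℝ) ^ (-k)) ^ (-1/k) = 2 := by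
        rw [← Real.rpow_mul (by norm_num : (0:ℝ) ≤ 2)]
        rw [show (-k) * (-1/k) = 1 by field_simp, Real.rpow_one]
      rw [← h2eq]
      exact Real.rpow_le_rpow (by positivity) hnB hexp
    have hyl := le_ycut hk hn
    have hcut : ((n:ℝ) / Bnd k) ^ (-1/k) / 2 ≤ ((cutoff k n : ℕ) : ℝ) := by
      have h3 := ycut_lt_cutoff_add_one hk0 hn
      have h4 : 2 ≤ ycut k n := hy2.trans hyl
      linarith
    have hbase : (0:ℝ) < ((n:ℝ) / Bnd k) ^ (-1/k) / 2 := by positivity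
    have hm : ((min (cutoff k n) n : ℕ) : ℝ) ^ (k+1)
        ≤ (((n:ℝ) / Bnd k) ^ (-1/k) / 2) ^ (k+1) := by
      rw [h1]
      exact Real.rpow_le_rpow_of_nonpos hbase hcut (by linarith)
    have halg : (((n:ℝ) / Bnd k) ^ (-1/k) / 2) ^ (k+1)
        = (n:ℝ) ^ ((-1/k) * (k+1)) * ((Bnd k) ^ ((1/k) * (k+1)) * (2:ℝ) ^ (-(k+1))) := by
      rw [Real.div_rpow (by positivity) (by norm_num : (0:ℝ) ≤ 2)]
      rw [← Real.rpow_mul hnB0.le]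
      rw [Real.div_rpow hn0.le hB.le]
      rw [Real.rpow_neg (by norm_num : (0:ℝ) ≤ 2),
        show (1/k) * (k+1) = -((-1/k) * (k+1)) by ring, Real.rpow_neg hB.le]
      ring
    calc Real.sqrt n * ((min (cutoff k n) n : ℕ) : ℝ) ^ (k+1)
        ≤ Real.sqrt n * ((((n:ℝ) / Bnd k) ^ (-1/k) / 2) ^ (k+1)) :=
          mul_le_mul_of_nonneg_left hm (Real.sqrt_nonneg _)
      _ = (n:ℝ) ^ ((1:ℝ)/2) * ((n:ℝ) ^ ((-1/k) * (k+1))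
            * ((Bnd k) ^ ((1/k) * (k+1)) * (2:ℝ) ^ (-(k+1)))) := by
          rw [hsqrt, halg]
      _ = (n:ℝ) ^ ((1:ℝ)/2 + (-1/k) * (k+1)) * Ctail k := by
          rw [Real.rpow_add hn0, Ctail]
          ring
      _ = Ctail k * (n:ℝ) ^ (-(1/2 + 1/k)) := by
          rw [show (1:ℝ)/2 + (-1/k) * (k+1) = -(1/2 + 1/k) by field_simp; ring]
          ring

lemma tail_term_le (hk : k < -1) {n : ℕ} (hn : 1 ≤ n)
    (hbig : Bnd k * (2:ℝ) ^ (-k) ≤ (n:ℝ)) :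
    normConst k n * Real.sqrt n *
        (∑ x ∈ Finset.Icc (min (cutoff k n) n + 1) n, (x:ℝ) ^ k)
      ≤ (Ctail k / (-(k+1))) * (n:ℝ) ^ (-(1/2 + 1/k)) := by
  have hk0 : k < 0 := by linarith
  set m := min (cutoff k n) n with hmdef
  have hm1 : 1 ≤ m := le_min (one_le_cutoff hk0 hn) hn
  have hkp : 0 < -(k+1) := by linarith
  have htail := tail_sum_le hk hm1 n
  have hα0 : 0 < normConst k n := normConst_pos k hn
  have hα1 : normConst k n ≤ 1 := normConst_le_one k hn
  have hsq : 0 ≤ Real.sqrt n := Real.sqrt_nonneg _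
  have hT0 : 0 ≤ ∑ x ∈ Finset.Icc (m + 1) n, (x:ℝ) ^ k := by positivity
  calc normConst k n * Real.sqrt n * (∑ x ∈ Finset.Icc (m + 1) n, (x:ℝ) ^ k)
      ≤ 1 * Real.sqrt n * (∑ x ∈ Finset.Icc (m + 1) n, (x:ℝ) ^ k) := by
        apply mul_le_mul_of_nonneg_right _ hT0
        exact mul_le_mul_of_nonneg_right hα1 hsq
    _ = Real.sqrt n * (∑ x ∈ Finset.Icc (m + 1) n, (x:ℝ) ^ k) := by ring
    _ ≤ Real.sqrt n * ((m:ℝ) ^ (k+1) / (-(k+1))) :=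
        mul_le_mul_of_nonneg_left htail hsq
    _ = (Real.sqrt n * (m:ℝ) ^ (k+1)) / (-(k+1)) := by ring
    _ ≤ (Ctail k * (n:ℝ) ^ (-(1/2 + 1/k))) / (-(k+1)) := by
        apply div_le_div_of_nonneg_right (sqrt_mul_min_rpow hk hn hbig) hkp.le
    _ = (Ctail k / (-(k+1))) * (n:ℝ) ^ (-(1/2 + 1/k)) := by ring

lemma sqrt_normConst_le_one (k : ℝ) {n : ℕ} (hn : 1 ≤ n) :
    Real.sqrt (normConst k n) ≤ 1 := by
  rw [show (1:ℝ) = Real.sqrt 1 by rw [Real.sqrt_one]]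
  exact Real.sqrt_le_sqrt (normConst_le_one k hn)

lemma min_le_rpow (hk : k < 0) {n : ℕ} (hn : 1 ≤ n) :
    ((min (cutoff k n) n : ℕ) : ℝ) ≤ (n:ℝ) ^ (-1/k) := by
  calc ((min (cutoff k n) n : ℕ) : ℝ) ≤ ((cutoff k n : ℕ) : ℝ) := by
        exact_mod_cast min_le_left _ _
    _ ≤ ycut k n := cutoff_le_ycut hk hn
    _ ≤ (n:ℝ) ^ (-1/k) := ycut_le hk hn

lemma head_term_mid (hk2 : -2 < k) (hk1 : k < -1) {n : ℕ} (hn : 1 ≤ n) :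
    Real.sqrt (normConst k n) * (∑ x ∈ Finset.Icc 1 (min (cutoff k n) n), (x:ℝ) ^ (k/2))
      ≤ (1 + 1/(k/2+1)) * (n:ℝ) ^ (-(1/2 + 1/k)) := by
  have hk0 : k < 0 := by linarith
  have hkne : k ≠ 0 := ne_of_lt hk0
  have hn1 : (1:ℝ) ≤ (n:ℝ) := by exact_mod_cast hn
  have hp0 : -1 < k/2 := by linarith
  have hp : k/2 < 0 := by linarith
  have hp1 : 0 < k/2 + 1 := by linarith
  set m := min (cutoff k n) n with hmdef
  have hhead := head_sum_le_mid hp0 hp m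
  have he0 : 0 ≤ -(1/2 + 1/k) := by
    have h1 : 1/k * k = 1 := one_div_mul_cancel hkne
    nlinarith
  have hne : 1 ≤ (n:ℝ) ^ (-(1/2 + 1/k)) := Real.one_le_rpow hn1 he0
  have hmb : (m:ℝ) ^ (k/2+1) ≤ (n:ℝ) ^ (-(1/2 + 1/k)) := by
    calc (m:ℝ) ^ (k/2+1) ≤ ((n:ℝ) ^ (-1/k)) ^ (k/2+1) :=
          Real.rpow_le_rpow (Nat.cast_nonneg m) (min_le_rpow hk0 hn) hp1.le
      _ = (n:ℝ) ^ ((-1/k) * (k/2+1)) := by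
          rw [← Real.rpow_mul (by positivity)]
      _ = (n:ℝ) ^ (-(1/2 + 1/k)) := by
          congr 1
          have h : (1:ℝ)/k * k = 1 := one_div_mul_cancel hkne
          linear_combination (-(1/2) : ℝ) * h
  have hsum : (∑ x ∈ Finset.Icc 1 m, (x:ℝ) ^ (k/2))
      ≤ (1 + 1/(k/2+1)) * (n:ℝ) ^ (-(1/2 + 1/k)) := by
    have h2 : (m:ℝ) ^ (k/2+1) / (k/2+1) ≤ (n:ℝ) ^ (-(1/2 + 1/k)) / (k/2+1) :=
      div_le_div_of_nonneg_right hmb hp1.le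
    calc (∑ x ∈ Finset.Icc 1 m, (x:ℝ) ^ (k/2)) ≤ 1 + (m:ℝ) ^ (k/2+1) / (k/2+1) := hhead
      _ ≤ (n:ℝ) ^ (-(1/2 + 1/k)) + (n:ℝ) ^ (-(1/2 + 1/k)) / (k/2+1) := by
          apply add_le_add hne h2
      _ = (1 + 1/(k/2+1)) * (n:ℝ) ^ (-(1/2 + 1/k)) := by ring
  have hs0 : 0 ≤ ∑ x ∈ Finset.Icc 1 m, (x:ℝ) ^ (k/2) := by positivity
  calc Real.sqrt (normConst k n) * (∑ x ∈ Finset.Icc 1 m, (x:ℝ) ^ (k/2))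
      ≤ 1 * (∑ x ∈ Finset.Icc 1 m, (x:ℝ) ^ (k/2)) :=
        mul_le_mul_of_nonneg_right (sqrt_normConst_le_one k hn) hs0
    _ = ∑ x ∈ Finset.Icc 1 m, (x:ℝ) ^ (k/2) := one_mul _
    _ ≤ (1 + 1/(k/2+1)) * (n:ℝ) ^ (-(1/2 + 1/k)) := hsum

lemma head_term_log {n : ℕ} (hn : 1 ≤ n) :
    Real.sqrt (normConst (-2) n) *
        (∑ x ∈ Finset.Icc 1 (min (cutoff (-2) n) n), (x:ℝ) ^ ((-2:ℝ)/2))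
      ≤ 1 + Real.log n := by
  have hn1 : (1:ℝ) ≤ (n:ℝ) := by exact_mod_cast hn
  set m := min (cutoff (-2) n) n with hmdef
  have hmn : m ≤ n := min_le_right _ _
  have heq : ((-2:ℝ)/2) = (-1:ℝ) := by norm_num
  rw [heq]
  have hhead := head_sum_le_harmonic m
  have hm1 : 1 ≤ m := le_min (one_le_cutoff (by norm_num) hn) hn
  have hlog : Real.log m ≤ Real.log n := by
    apply Real.log_le_log (by exact_mod_cast hm1)
    exact_mod_cast hmn
  have hs0 : 0 ≤ ∑ x ∈ Finset.Icc 1 m, (x:ℝ) ^ (-1:ℝ) := by positivity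
  calc Real.sqrt (normConst (-2) n) * (∑ x ∈ Finset.Icc 1 m, (x:ℝ) ^ (-1:ℝ))
      ≤ 1 * (∑ x ∈ Finset.Icc 1 m, (x:ℝ) ^ (-1:ℝ)) :=
        mul_le_mul_of_nonneg_right (sqrt_normConst_le_one _ hn) hs0
    _ = ∑ x ∈ Finset.Icc 1 m, (x:ℝ) ^ (-1:ℝ) := one_mul _
    _ ≤ 1 + Real.log m := hhead
    _ ≤ 1 + Real.log n := by linarith

lemma head_term_conv (hk : k < -2) {n : ℕ} (hn : 1 ≤ n) :
    Real.sqrt (normConst k n) *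
        (∑ x ∈ Finset.Icc 1 (min (cutoff k n) n), (x:ℝ) ^ (k/2))
      ≤ 1 + 1 / (-(k/2+1)) := by
  have hp : k/2 < -1 := by linarith
  set m := min (cutoff k n) n with hmdef
  have hhead := head_sum_le_conv hp m
  have hs0 : 0 ≤ ∑ x ∈ Finset.Icc 1 m, (x:ℝ) ^ (k/2) := by positivity
  calc Real.sqrt (normConst k n) * (∑ x ∈ Finset.Icc 1 m, (x:ℝ) ^ (k/2))
      ≤ 1 * (∑ x ∈ Finset.Icc 1 m, (x:ℝ) ^ (k/2)) :=
        mul_le_mul_of_nonneg_right (sqrt_normConst_le_one _ hn) hs0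
    _ = ∑ x ∈ Finset.Icc 1 m, (x:ℝ) ^ (k/2) := one_mul _
    _ ≤ 1 + 1 / (-(k/2+1)) := hhead

end Neg

theorem unknown_power_law_complexity (k : ℝ) (hk : k < 0) :
    ((-1 ≤ k ∧ k < 0) → IsBigO' (unknownCost k) (fun n => Real.sqrt n)) ∧
    ((-2 < k ∧ k < -1) →
      IsBigO' (unknownCost k) (fun n => (n : ℝ) ^ (-(1/2 + 1/k)))) ∧
    (k = -2 → IsBigO' (unknownCost k) (fun n => Real.log n)) ∧
    (k < -2 → IsBigO' (unknownCost k) (fun _ => (1 : ℝ))) := by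
  refine ⟨?_, ?_, ?_, ?_⟩
  · rintro ⟨-, -⟩
    exact ⟨2, 1, two_pos, fun n hn => cost_le_two_sqrt hk hn⟩
  · rintro ⟨hA, hB⟩
    refine ⟨(1 + 1/(k/2+1)) + Ctail k / (-(k+1)), max 1 ⌈Bnd k * (2:ℝ)^(-k)⌉₊, ?_, ?_⟩
    · have h1 : 0 < k/2+1 := by linarith
      have h2 : 0 < -(k+1) := by linarith
      have h3 : 1 ≤ Ctail k := one_le_Ctail hB
      have h4 : 0 < 1/(k/2+1) := by positivity
      have h5 : 0 < Ctail k / (-(k+1)) := by positivity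
      linarith
    · intro n hn
      have hn1 : 1 ≤ n := le_trans (le_max_left _ _) hn
      have hbig : Bnd k * (2:ℝ)^(-k) ≤ (n:ℝ) := by
        have h := le_trans (le_max_right _ _) hn
        exact le_trans (Nat.le_ceil _) (by exact_mod_cast h)
      have t1 := head_term_mid hA hB hn1
      have t2 := tail_term_le hB hn1 hbig
      show Real.sqrt (normConst k n) *
          (∑ x ∈ Finset.Icc 1 (min (cutoff k n) n), (x : ℝ) ^ (k / 2)) +
        normConst k n * Real.sqrt n *
          (∑ x ∈ Finset.Icc (min (cutoff k n) n + 1) n, (x : ℝ) ^ k)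
        ≤ ((1 + 1/(k/2+1)) + Ctail k / (-(k+1))) * (n:ℝ) ^ (-(1/2 + 1/k))
      rw [add_mul]
      exact add_le_add t1 t2
  · rintro rfl
    refine ⟨2 + Ctail (-2), max 3 ⌈Bnd (-2) * (2:ℝ)^(-(-2:ℝ))⌉₊, ?_, ?_⟩
    · have h3 : 1 ≤ Ctail (-2) := one_le_Ctail (by norm_num)
      linarith
    · intro n hn
      have hn3 : 3 ≤ n := le_trans (le_max_left _ _) hn
      have hn1 : 1 ≤ n := by omega
      have hbig : Bnd (-2) * (2:ℝ)^(-(-2:ℝ)) ≤ (n:ℝ) := by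
        have h := le_trans (le_max_right _ _) hn
        exact le_trans (Nat.le_ceil _) (by exact_mod_cast h)
      have t1 := head_term_log hn1
      have t2 := tail_term_le (by norm_num : (-2:ℝ) < -1) hn1 hbig
      have hrpow : ((n:ℝ)) ^ (-(1/2 + 1/(-2:ℝ))) = 1 := by
        norm_num
      rw [hrpow] at t2
      have hE : -((-2:ℝ)+1) = 1 := by norm_num
      rw [hE, div_one] at t2
      have hlog1 : 1 ≤ Real.log n := by
        have h3 : Real.exp 1 ≤ 3 := by
          have := Real.exp_one_lt_d9
          linarith
        have : (1:ℝ) ≤ Real.log 3 := (Real.le_log_iff_exp_le (by norm_num)).mpr h3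
        have h4 : Real.log 3 ≤ Real.log n := by
          apply Real.log_le_log (by norm_num)
          exact_mod_cast hn3
        linarith
      have hCt : 1 ≤ Ctail (-2) := one_le_Ctail (by norm_num)
      show Real.sqrt (normConst (-2) n) *
          (∑ x ∈ Finset.Icc 1 (min (cutoff (-2) n) n), (x : ℝ) ^ ((-2:ℝ) / 2)) +
        normConst (-2) n * Real.sqrt n *
          (∑ x ∈ Finset.Icc (min (cutoff (-2) n) n + 1) n, (x : ℝ) ^ (-2:ℝ))
        ≤ (2 + Ctail (-2)) * Real.log n
      nlinarith
  · intro hk4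
    have hB : k < -1 := by linarith
    refine ⟨(1 + 1/(-(k/2+1))) + Ctail k / (-(k+1)), max 1 ⌈Bnd k * (2:ℝ)^(-k)⌉₊, ?_, ?_⟩
    · have h1 : 0 < -(k/2+1) := by linarith
      have h2 : 0 < -(k+1) := by linarith
      have h3 : 1 ≤ Ctail k := one_le_Ctail hB
      have h4 : 0 < 1/(-(k/2+1)) := by positivity
      have h5 : 0 < Ctail k / (-(k+1)) := by positivity
      linarith
    · intro n hn
      have hn1 : 1 ≤ n := le_trans (le_max_left _ _) hn
      have hn1' : (1:ℝ) ≤ (n:ℝ) := by exact_mod_cast hn1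
      have hbig : Bnd k * (2:ℝ)^(-k) ≤ (n:ℝ) := by
        have h := le_trans (le_max_right _ _) hn
        exact le_trans (Nat.le_ceil _) (by exact_mod_cast h)
      have t1 := head_term_conv hk4 hn1
      have t2 := tail_term_le hB hn1 hbig
      have hkne : k ≠ 0 := ne_of_lt hk
      have hiden : (1:ℝ)/k * k = 1 := one_div_mul_cancel hkne
      have hexp : -(1/2 + 1/k) ≤ 0 := by nlinarith
      have hle1 : ((n:ℝ)) ^ (-(1/2 + 1/k)) ≤ 1 :=
        Real.rpow_le_one_of_one_le_of_nonpos hn1' hexp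
      have hc2 : 0 ≤ Ctail k / (-(k+1)) := by
        have h3 : 1 ≤ Ctail k := one_le_Ctail hB
        have h2 : 0 < -(k+1) := by linarith
        positivity
      have t2' : normConst k n * Real.sqrt n *
          (∑ x ∈ Finset.Icc (min (cutoff k n) n + 1) n, (x:ℝ) ^ k)
          ≤ Ctail k / (-(k+1)) := by
        refine t2.trans ?_
        calc Ctail k / (-(k+1)) * (n:ℝ) ^ (-(1/2 + 1/k))
            ≤ Ctail k / (-(k+1)) * 1 := mul_le_mul_of_nonneg_left hle1 hc2
          _ = Ctail k / (-(k+1)) := mul_one _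
      show Real.sqrt (normConst k n) *
          (∑ x ∈ Finset.Icc 1 (min (cutoff k n) n), (x : ℝ) ^ (k / 2)) +
        normConst k n * Real.sqrt n *
          (∑ x ∈ Finset.Icc (min (cutoff k n) n + 1) n, (x : ℝ) ^ k)
        ≤ ((1 + 1/(-(k/2+1))) + Ctail k / (-(k+1))) * 1
      rw [mul_one]
      exact add_le_add t1 t2'
end

section
/- Let 0 < ε < 1/2 and set k = −3/2 − ε. Define S_j(n) = Σ_{x=1}^n x^j (real powers). Then S_{k+1}(n)/S_k(n) = Ω(n^{1/2 − ε}) while S_{k+1/2}(n)/S_k(n) = O(1). -/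
open Finset

lemma powSum_nonneg (j : ℝ) (n : ℕ) : 0 ≤ powSum j n :=
  Finset.sum_nonneg fun x _ => Real.rpow_nonneg (Nat.cast_nonneg x) j

lemma powSum_ge_one (j : ℝ) {n : ℕ} (hn : 1 ≤ n) : 1 ≤ powSum j n := by
  have h1 : (1 : ℕ) ∈ Finset.Icc 1 n := by simp [hn]
  have := Finset.single_le_sum (f := fun x : ℕ => (x : ℝ) ^ j)
    (fun x _ => Real.rpow_nonneg (Nat.cast_nonneg x) j) h1
  simpa [powSum, Real.one_rpow] using this

lemma powSum_le_tsum {j : ℝ} (hj : j < -1) (n : ℕ) :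
    powSum j n ≤ ∑' x : ℕ, (x : ℝ) ^ j := by
  exact Summable.sum_le_tsum _ (fun x _ => Real.rpow_nonneg (Nat.cast_nonneg x) j)
    (Real.summable_nat_rpow.mpr hj)

lemma powSum_lower {j : ℝ} (hj : j ≤ 0) {n : ℕ} (hn : 1 ≤ n) :
    (n : ℝ) * (n : ℝ) ^ j ≤ powSum j n := by
  have hcard : (Finset.Icc 1 n).card = n := by simp
  calc (n : ℝ) * (n : ℝ) ^ j = ∑ _x ∈ Finset.Icc 1 n, (n : ℝ) ^ j := by
        rw [Finset.sum_const, hcard, nsmul_eq_mul]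
    _ ≤ powSum j n := by
        apply Finset.sum_le_sum
        intro x hx
        simp only [Finset.mem_Icc] at hx
        have hx1 : (1:ℝ) ≤ (x:ℝ) := by exact_mod_cast hx.1
        exact Real.rpow_le_rpow_of_nonpos (lt_of_lt_of_le zero_lt_one hx1)
          (by exact_mod_cast hx.2) hj

theorem superexponential_separation (ε : ℝ) (hε0 : 0 < ε) (hε1 : ε < 1/2) :
    (∃ c : ℝ, ∃ N : ℕ, 0 < c ∧ ∀ n ≥ N,
      c * (n : ℝ) ^ (1/2 - ε) ≤
        powSum ((-3/2 - ε) + 1) n / powSum (-3/2 - ε) n) ∧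
    (∃ C : ℝ, ∃ N : ℕ, 0 < C ∧ ∀ n ≥ N,
      powSum ((-3/2 - ε) + 1/2) n / powSum (-3/2 - ε) n ≤ C) := by
  have hk : (-3/2 - ε : ℝ) < -1 := by linarith
  have hk2 : (-3/2 - ε + 1/2 : ℝ) < -1 := by linarith
  set T : ℝ := ∑' x : ℕ, (x : ℝ) ^ (-3/2 - ε) with hT
  have hT1 : (1 : ℝ) ≤ T := by
    have := powSum_le_tsum hk 1
    exact le_trans (powSum_ge_one _ le_rfl) this
  have hTpos : 0 < T := lt_of_lt_of_le one_pos hT1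
  constructor
  · refine ⟨1 / T, 1, by positivity, fun n hn => ?_⟩
    have hn1 : (1 : ℝ) ≤ (n : ℝ) := by exact_mod_cast hn
    have hnpos : (0 : ℝ) < n := lt_of_lt_of_le zero_lt_one hn1
    have hnum : (n : ℝ) ^ (1/2 - ε) ≤ powSum (-3/2 - ε + 1) n := by
      have := powSum_lower (j := -3/2 - ε + 1) (by linarith) hn
      calc (n : ℝ) ^ (1/2 - ε) = (n : ℝ) * (n : ℝ) ^ (-3/2 - ε + 1) := by
            rw [← Real.rpow_one_add' hnpos.le (by intro h; nlinarith)]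
            ring_nf
        _ ≤ _ := this
    have hden : powSum (-3/2 - ε) n ≤ T := powSum_le_tsum hk n
    have hdenpos : (0 : ℝ) < powSum (-3/2 - ε) n :=
      lt_of_lt_of_le one_pos (powSum_ge_one _ hn)
    calc 1 / T * (n : ℝ) ^ (1/2 - ε) ≤ 1 / T * powSum (-3/2 - ε + 1) n :=
          mul_le_mul_of_nonneg_left hnum (by positivity)
      _ = powSum (-3/2 - ε + 1) n / T := by ring
      _ ≤ powSum (-3/2 - ε + 1) n / powSum (-3/2 - ε) n :=
          div_le_div_of_nonneg_left (powSum_nonneg _ _) hdenpos hden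
  · refine ⟨∑' x : ℕ, (x : ℝ) ^ (-3/2 - ε + 1/2), 1, ?_, fun n hn => ?_⟩
    · exact lt_of_lt_of_le one_pos
        (le_trans (powSum_ge_one _ le_rfl) (powSum_le_tsum hk2 1))
    · have hdenpos : (1 : ℝ) ≤ powSum (-3/2 - ε) n := powSum_ge_one _ hn
      calc powSum (-3/2 - ε + 1/2) n / powSum (-3/2 - ε) n
          ≤ powSum (-3/2 - ε + 1/2) n / 1 := by
            exact div_le_div_of_nonneg_left (powSum_nonneg _ _) one_pos hdenpos
        _ ≤ _ := by rw [div_one]; exact powSum_le_tsum hk2 n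
end
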